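/- Let γ > 0 and, for α ∈ (0,1), let q(α) = α^{−γ} · ( (1/α) log(1/(1−α)) )^{−γ} (the quantile function of order 1−α of the Fréchet distribution with tail index γ). Then the function Δ(α) := γ + α (log q)'(α) satisfies Δ(α) = −(γ/2) α (1 + O(α)) as α → 0; in particular Δ(α)/α → −γ/2 as α → 0. -/

import Mathlib

/-! Since `α ^ (-γ) * ((1/α) L) ^ (-γ) = L ^ (-γ)` with `L(α) = -log (1 - α)`, we have
`log q = -γ log L`, hence `Δ(α) = γ (1 - α / ((1 - α) L(α)))`. The Taylor expansion
`L(α) = α + α²/2 + O(α³)` gives `α / ((1 - α) L(α)) = 1 + α/2 + O(α²)`. -/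

open Filter Set Topology

namespace Real

lemma neg_log_one_sub_pos {a : ℝ} (h0 : 0 < a) (h1 : a < 1) : 0 < -log (1 - a) :=
  neg_pos.mpr (log_neg (by linarith) (by linarith))

lemma rpow_mul_one_div_mul_rpow {a x : ℝ} (ha : 0 < a) (hx : 0 ≤ x) (p : ℝ) :
    a ^ p * ((1 / a) * x) ^ p = x ^ p := by
  rw [← mul_rpow ha.le (by positivity), ← mul_assoc, mul_one_div_cancel ha.ne', one_mul]

lemma hasDerivAt_log_neg_log_one_sub {a : ℝ} (h0 : 0 < a) (h1 : a < 1) :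
    HasDerivAt (fun x => log (-log (1 - x))) ((1 - a) * -log (1 - a))⁻¹ a := by
  have hL : HasDerivAt (fun x => -log (1 - x)) (-(-1 / (1 - a))) a :=
    (((hasDerivAt_id' a).const_sub 1).log (by linarith)).neg
  convert hL.log (neg_log_one_sub_pos h0 h1).ne' using 1
  field_simp

lemma abs_neg_log_one_sub_sub_le {α : ℝ} (h0 : 0 < α) (h1 : α < 1 / 2) :
    |-log (1 - α) - (α + α ^ 2 / 2)| ≤ 2 * α ^ 3 := by
  have htaylor := abs_log_sub_add_sum_range_le (abs_lt.mpr ⟨by linarith, by linarith⟩) 2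
  norm_num [Finset.sum_range_succ, abs_of_pos h0] at htaylor
  calc |-log (1 - α) - (α + α ^ 2 / 2)| = |α + α ^ 2 / 2 + log (1 - α)| := by
        rw [← abs_neg]; ring_nf
    _ ≤ α ^ 3 / (1 - α) := htaylor
    _ ≤ 2 * α ^ 3 := by
        rw [div_le_iff₀ (by linarith)]
        nlinarith [pow_pos h0 3]

lemma abs_div_mul_neg_log_one_sub_sub_le {α : ℝ} (h0 : 0 < α) (h1 : α < 1 / 2) :
    |α / ((1 - α) * -log (1 - α)) - (1 + α / 2)| ≤ 6 * α ^ 2 := by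
  set L := -log (1 - α)
  have hL : 0 < L := neg_log_one_sub_pos h0 (by linarith)
  have hLα : α ≤ L := by linarith [log_le_sub_one_of_pos (x := 1 - α) (by linarith)]
  have hden : α / 2 ≤ (1 - α) * L := by nlinarith
  have hnum : |2 * α - (2 + α) * (1 - α) * L| ≤ 6 * α ^ 3 := by
    obtain ⟨hlo, hhi⟩ := abs_le.mp (abs_neg_log_one_sub_sub_le h0 h1)
    rw [abs_le]
    constructor <;> nlinarith [pow_pos h0 3]
  have hsplit : α / ((1 - α) * L) - (1 + α / 2)
      = (2 * α - (2 + α) * (1 - α) * L) / (2 * ((1 - α) * L)) := by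
    have : 1 - α ≠ 0 := by linarith
    field_simp
  have hden_pos : 0 < 2 * ((1 - α) * L) := by linarith
  rw [hsplit, abs_div, abs_of_pos hden_pos, div_le_iff₀ hden_pos]
  calc |2 * α - (2 + α) * (1 - α) * L| ≤ 6 * α ^ 3 := hnum
    _ = 6 * α ^ 2 * (2 * (α / 2)) := by ring
    _ ≤ 6 * α ^ 2 * (2 * ((1 - α) * L)) := by gcongr

end Real

open Real

lemma tendsto_div_nhdsGT_zero_of_abs_sub_mul_le {f : ℝ → ℝ} {c C α₀ : ℝ} (hα₀ : 0 < α₀)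
    (h : ∀ α, 0 < α → α < α₀ → |f α - c * α| ≤ C * α ^ 2) :
    Tendsto (fun α => f α / α) (𝓝[>] 0) (𝓝 c) := by
  rw [← tendsto_sub_nhds_zero_iff]
  refine squeeze_zero_norm' (a := fun α => C * α) ?_ ?_
  · filter_upwards [Ioo_mem_nhdsGT hα₀] with α ⟨h0, h1⟩
    have hdiv : f α / α - c = (f α - c * α) / α := by field_simp
    rw [norm_eq_abs, hdiv, abs_div, abs_of_pos h0, div_le_iff₀ h0]
    linarith [h α h0 h1, show C * α * α = C * α ^ 2 by ring]
  · simpa using ((continuous_const_mul C).tendsto 0).mono_left nhdsWithin_le_nhds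

/-- For the Fréchet quantile function
`q(α) = α^{-γ} ((1/α) log(1/(1-α)))^{-γ}` with tail index `γ > 0`, the function
`Δ(α) := γ + α (log q)'(α)` satisfies `Δ(α) = -(γ/2) α (1 + O(α))` as `α → 0⁺`;
in particular `Δ(α)/α → -γ/2` as `α → 0⁺`. -/
theorem frechet_Delta_asymptotics
    (γ : ℝ) (hγ : 0 < γ)
    (q : ℝ → ℝ)
    (hqdef : ∀ α ∈ Set.Ioo (0:ℝ) 1,
      q α = α ^ (-γ) * ((1 / α) * Real.log (1 / (1 - α))) ^ (-γ))
    (Δ : ℝ → ℝ)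
    (hΔdef : ∀ α ∈ Set.Ioo (0:ℝ) 1,
      Δ α = γ + α * deriv (fun a => Real.log (q a)) α) :
    (∃ C > (0:ℝ), ∃ α₀ > (0:ℝ), ∀ α : ℝ, 0 < α → α < α₀ →
        |Δ α + (γ / 2) * α| ≤ C * α ^ 2) ∧
      Tendsto (fun α => Δ α / α) (nhdsWithin 0 (Set.Ioi 0)) (nhds (-(γ / 2))) := by
  have hlogq : ∀ a ∈ Ioo (0 : ℝ) 1, log (q a) = -γ * log (-log (1 - a)) := fun a ha => by
    rw [hqdef a ha, one_div (1 - a), log_inv,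
      rpow_mul_one_div_mul_rpow ha.1 (neg_log_one_sub_pos ha.1 ha.2).le,
      log_rpow (neg_log_one_sub_pos ha.1 ha.2)]
  have hΔ : ∀ a ∈ Ioo (0 : ℝ) 1, Δ a = γ * (1 - a / ((1 - a) * -log (1 - a))) := fun a ha => by
    have hlogq_eq : (fun x => log (q x)) =ᶠ[𝓝 a] fun x => -γ * log (-log (1 - x)) :=
      eventually_of_mem (isOpen_Ioo.mem_nhds ha) hlogq
    rw [hΔdef a ha, hlogq_eq.deriv_eq,
      ((hasDerivAt_log_neg_log_one_sub ha.1 ha.2).const_mul (-γ)).deriv]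
    ring
  have hest : ∀ α, 0 < α → α < 1 / 2 → |Δ α + (γ / 2) * α| ≤ 6 * γ * α ^ 2 := by
    intro α h0 h1
    rw [hΔ α ⟨h0, by linarith⟩,
      show γ * (1 - α / ((1 - α) * -log (1 - α))) + γ / 2 * α
        = -γ * (α / ((1 - α) * -log (1 - α)) - (1 + α / 2)) by ring,
      abs_mul, abs_neg, abs_of_pos hγ, mul_comm 6 γ, mul_assoc]
    gcongr
    exact abs_div_mul_neg_log_one_sub_sub_le h0 h1
  refine ⟨⟨6 * γ, by positivity, 1 / 2, by norm_num, hest⟩, ?_⟩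
  exact tendsto_div_nhdsGT_zero_of_abs_sub_mul_le (by norm_num : (0 : ℝ) < 1 / 2)
    fun α h0 h1 => by simpa [sub_neg_eq_add] using hest α h0 h1
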